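/- For the quadratic regression model without intercept (n = 2) on [0,1]: if z ∈ (−∞, (1 − √2)/2) ∪ (1/2, ∞), then the design supported at the points √2 − 1 and 1 with weights ω_i(z) = |L̄_i′(z)|/(|L̄_1′(z)| + |L̄_2′(z)|) (i = 1, 2) is c-optimal for c = f′(z) = (1, 2z)ᵀ: for every design η on [0,1] and every v ∈ ℝ² with M(η)v = f′(z), one has f′(z)ᵀv ≥ (|L̄_1′(z)| + |L̄_2′(z)|)², and this value is attained by the stated design. -/

import Mathlib

/-!
Elfving's argument. The polynomial `p = L̄₂ − L̄₁ = (3 + 2√2) x² − (2 + 2√2) x` is `u ⬝ᵥ f` for a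
fixed `u`, satisfies `|p| ≤ 1` on `[0, 1]` and `p(s₁) = −1`, `p(s₂) = 1`. Since
`f′(z) = L̄₁′(z) f(s₁) + L̄₂′(z) f(s₂)`, we get `u ⬝ᵥ f′(z) = L̄₂′(z) − L̄₁′(z)`, which has absolute
value `|L̄₁′(z)| + |L̄₂′(z)|` because the two derivatives have opposite signs for these `z`.
If `M(η) v = f′(z)`, Cauchy–Schwarz for the weights of `η` gives
`(u ⬝ᵥ f′(z))² = (Σ ωₖ p(xₖ) f(xₖ)ᵀv)² ≤ Σ ωₖ p(xₖ)² · Σ ωₖ (f(xₖ)ᵀv)² ≤ f′(z)ᵀv`,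
and for the two-point design `v = p′(z) u` gives equality.
-/

open Finset Matrix Real

/-- The Lagrange basis polynomials without intercept for nodes `s_1, …, s_n`:
`L̄_i(z) = z ∏_{j≠i}(z − s_j) / (s_i ∏_{j≠i}(s_i − s_j))`. -/
noncomputable def Lbar (n : ℕ) (s : ℕ → ℝ) (i : ℕ) (z : ℝ) : ℝ :=
  (z * ∏ j ∈ (Finset.Icc 1 n).erase i, (z - s j)) /
    (s i * ∏ j ∈ (Finset.Icc 1 n).erase i, (s i - s j))

/-- The nodes `s_1 = √2 − 1`, `s_2 = 1` of the quadratic model on `[0,1]`. -/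
noncomputable def nodes2 : ℕ → ℝ := fun i => if i = 1 then Real.sqrt 2 - 1 else 1

/-- The regression vector `f(x) = (x, x²)ᵀ` of the quadratic model without intercept. -/
def modelVec2 (x : ℝ) : Fin 2 → ℝ := fun i => x ^ (i.1 + 1)

/-- An approximate design on `[0, 1]`: a probability measure with finite support
`x_1, …, x_m ⊆ [0, 1]` and weights `ω_1, …, ω_m`. -/
structure Design2 where
  m : ℕ
  pts : Fin m → ℝ
  wts : Fin m → ℝ
  pts_mem : ∀ i, pts i ∈ Set.Icc (0 : ℝ) 1
  wts_nonneg : ∀ i, 0 ≤ wts i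
  wts_sum : ∑ i, wts i = 1

/-- The information matrix `M(ξ) = Σᵢ ωᵢ f(xᵢ) f(xᵢ)ᵀ` of a design. -/
noncomputable def infoMatrix2 (ξ : Design2) : Matrix (Fin 2) (Fin 2) ℝ :=
  ∑ i, ξ.wts i • Matrix.vecMulVec (modelVec2 (ξ.pts i)) (modelVec2 (ξ.pts i))

section Elfving

variable {ι n : Type*} [Fintype ι] [Fintype n]

lemma dotProduct_sum_smul_vecMulVec_mulVec (w : ι → ℝ) (g : ι → n → ℝ) (u v : n → ℝ) :
    u ⬝ᵥ (∑ k, w k • vecMulVec (g k) (g k)) *ᵥ v = ∑ k, w k * ((u ⬝ᵥ g k) * (g k ⬝ᵥ v)) := by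
  simp only [sum_mulVec, dotProduct_sum, smul_mulVec, dotProduct_smul, smul_eq_mul]
  refine Finset.sum_congr rfl fun k _ => ?_
  rw [vecMulVec_mulVec, op_smul_eq_smul, dotProduct_smul, smul_eq_mul, mul_comm (g k ⬝ᵥ v)]

theorem sq_dotProduct_le_of_mulVec_eq {w : ι → ℝ} (hw : ∀ k, 0 ≤ w k) (hw₁ : ∑ k, w k = 1)
    {g : ι → n → ℝ} {u : n → ℝ} (hu : ∀ k, |u ⬝ᵥ g k| ≤ 1) {v c : n → ℝ}
    (hv : (∑ k, w k • vecMulVec (g k) (g k)) *ᵥ v = c) :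
    (u ⬝ᵥ c) ^ 2 ≤ c ⬝ᵥ v := by
  have hvv : c ⬝ᵥ v = ∑ k, w k * (g k ⬝ᵥ v) ^ 2 := by
    rw [dotProduct_comm, ← hv, dotProduct_sum_smul_vecMulVec_mulVec]
    simp_rw [dotProduct_comm v, sq]
  have huu : ∑ k, w k * (u ⬝ᵥ g k) ^ 2 ≤ 1 := by
    calc ∑ k, w k * (u ⬝ᵥ g k) ^ 2 ≤ ∑ k, w k :=
          sum_le_sum fun k _ =>
            mul_le_of_le_one_right (hw k) ((sq_le_one_iff_abs_le_one _).2 (hu k))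
      _ = 1 := hw₁
  have huc : u ⬝ᵥ c = ∑ k, w k * ((u ⬝ᵥ g k) * (g k ⬝ᵥ v)) := by
    rw [← hv, dotProduct_sum_smul_vecMulVec_mulVec]
  have hcs := sum_sq_le_sum_mul_sum_of_sq_le_mul univ
    (r := fun k => w k * ((u ⬝ᵥ g k) * (g k ⬝ᵥ v)))
    (f := fun k => w k * (u ⬝ᵥ g k) ^ 2) (g := fun k => w k * (g k ⬝ᵥ v) ^ 2)
    (fun k _ => mul_nonneg (hw k) (sq_nonneg _)) (fun k _ => mul_nonneg (hw k) (sq_nonneg _))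
    (fun k _ => le_of_eq (by ring))
  rw [huc, hvv]
  calc _ ≤ _ := hcs
    _ ≤ 1 * ∑ k, w k * (g k ⬝ᵥ v) ^ 2 :=
        mul_le_mul_of_nonneg_right huu (sum_nonneg fun k _ => mul_nonneg (hw k) (sq_nonneg _))
    _ = _ := one_mul _

lemma dotProduct_smul_add_smul {f₁ f₂ u : n → ℝ} (h₁ : u ⬝ᵥ f₁ = -1) (h₂ : u ⬝ᵥ f₂ = 1)
    (a₁ a₂ : ℝ) : u ⬝ᵥ (a₁ • f₁ + a₂ • f₂) = a₂ - a₁ := by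
  rw [dotProduct_add, dotProduct_smul, dotProduct_smul, h₁, h₂, smul_eq_mul, smul_eq_mul]
  ring

lemma two_point_mulVec_eq {f₁ f₂ u : n → ℝ} (h₁ : u ⬝ᵥ f₁ = -1) (h₂ : u ⬝ᵥ f₂ = 1)
    {a₁ a₂ : ℝ} (ha : a₁ * a₂ < 0) :
    ((|a₁| / (|a₁| + |a₂|)) • vecMulVec f₁ f₁ + (|a₂| / (|a₁| + |a₂|)) • vecMulVec f₂ f₂) *ᵥ
      ((a₂ - a₁) • u) = a₁ • f₁ + a₂ • f₂ := by
  rw [add_mulVec, smul_mulVec, smul_mulVec, vecMulVec_mulVec, vecMulVec_mulVec, op_smul_eq_smul,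
    op_smul_eq_smul, dotProduct_smul, dotProduct_smul, dotProduct_comm f₁, dotProduct_comm f₂, h₁,
    h₂, smul_smul, smul_smul, smul_eq_mul, smul_eq_mul]
  rcases mul_neg_iff.1 ha with ⟨ha₁, ha₂⟩ | ⟨ha₁, ha₂⟩
  · have hS : a₁ + -a₂ ≠ 0 := by linarith
    rw [abs_of_pos ha₁, abs_of_neg ha₂]
    congr 2 <;> field_simp <;> ring
  · have hS : -a₁ + a₂ ≠ 0 := by linarith
    rw [abs_of_neg ha₁, abs_of_pos ha₂]
    congr 2 <;> field_simp <;> ring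

end Elfving

lemma sq_abs_add_abs_of_mul_nonpos {a b : ℝ} (h : a * b ≤ 0) :
    (|a| + |b|) ^ 2 = (b - a) ^ 2 := by
  rw [add_sq, sq_abs, sq_abs, mul_assoc, ← abs_mul, abs_of_nonpos h]
  ring

lemma hasDerivAt_mul_sub_div (a c z : ℝ) :
    HasDerivAt (fun x => x * (x - a) / c) ((2 * z - a) / c) z := by
  have h : HasDerivAt (fun x => x * (x - a) / c) ((1 * (z - a) + z * 1) / c) z :=
    ((hasDerivAt_id z).mul ((hasDerivAt_id z).sub_const a)).div_const c
  convert h using 1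
  ring

lemma Lbar_two_one (s : ℕ → ℝ) :
    Lbar 2 s 1 = fun x => x * (x - s 2) / (s 1 * (s 1 - s 2)) := by
  funext x
  simp [Lbar, show (Icc 1 2).erase 1 = {2} from rfl]

lemma Lbar_two_two (s : ℕ → ℝ) :
    Lbar 2 s 2 = fun x => x * (x - s 1) / (s 2 * (s 2 - s 1)) := by
  funext x
  simp [Lbar, show (Icc 1 2).erase 2 = {1} from rfl]

lemma deriv_Lbar_two_one (s : ℕ → ℝ) (z : ℝ) :
    deriv (Lbar 2 s 1) z = (2 * z - s 2) / (s 1 * (s 1 - s 2)) := by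
  rw [Lbar_two_one, (hasDerivAt_mul_sub_div _ _ z).deriv]

lemma deriv_Lbar_two_two (s : ℕ → ℝ) (z : ℝ) :
    deriv (Lbar 2 s 2) z = (2 * z - s 1) / (s 2 * (s 2 - s 1)) := by
  rw [Lbar_two_two, (hasDerivAt_mul_sub_div _ _ z).deriv]

lemma deriv_Lbar_two_smul_modelVec2_add {s : ℕ → ℝ} (h₁ : s 1 ≠ 0) (h₂ : s 2 ≠ 0)
    (h : s 1 ≠ s 2) (z : ℝ) :
    deriv (Lbar 2 s 1) z • modelVec2 (s 1) + deriv (Lbar 2 s 2) z • modelVec2 (s 2) =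
      ![1, 2 * z] := by
  have h' : s 1 - s 2 ≠ 0 := sub_ne_zero.2 h
  have h'' : s 2 - s 1 ≠ 0 := sub_ne_zero.2 h.symm
  rw [deriv_Lbar_two_one, deriv_Lbar_two_two]
  ext i
  fin_cases i <;>
    simp only [Fin.zero_eta, Fin.mk_one, Fin.isValue, Pi.add_apply, Pi.smul_apply, modelVec2,
      Fin.coe_ofNat_eq_mod, Nat.zero_mod, Nat.mod_succ, zero_add, pow_one, smul_eq_mul,
      Nat.reduceAdd, cons_val_zero, cons_val_one, cons_val_fin_one] <;>
    field_simp <;> ring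

lemma nodes2_one : nodes2 1 = √2 - 1 := if_pos rfl

lemma nodes2_two : nodes2 2 = 1 := if_neg (by norm_num)

lemma deriv_Lbar_nodes2_one_mul_deriv_two_neg {z : ℝ} (hz : z < (1 - √2) / 2 ∨ 1 / 2 < z) :
    deriv (Lbar 2 nodes2 1) z * deriv (Lbar 2 nodes2 2) z < 0 := by
  have hr : √2 ^ 2 = 2 := Real.sq_sqrt zero_le_two
  have hr₁ := Real.one_lt_sqrt_two
  rw [deriv_Lbar_two_one, deriv_Lbar_two_two, nodes2_one, nodes2_two, div_mul_div_comm]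
  refine div_neg_of_pos_of_neg ?_ (by nlinarith)
  rcases hz with hz | hz
  · nlinarith
  · exact mul_pos (by linarith) (by linarith [Real.sqrt_two_lt_three_halves])

/-- The coefficients of `L̄₂ − L̄₁`. -/
noncomputable def chebVec2 : Fin 2 → ℝ := ![-(2 + 2 * √2), 3 + 2 * √2]

lemma chebVec2_dotProduct_modelVec2 (x : ℝ) :
    chebVec2 ⬝ᵥ modelVec2 x = (3 + 2 * √2) * x ^ 2 - (2 + 2 * √2) * x := by
  simp only [dotProduct, chebVec2, modelVec2, Fin.sum_univ_two, Fin.isValue, cons_val_zero,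
    cons_val_one, cons_val_fin_one, Fin.coe_ofNat_eq_mod, Nat.zero_mod, Nat.mod_succ, zero_add,
    pow_one, Nat.reduceAdd]
  ring

lemma abs_chebVec2_dotProduct_modelVec2_le_one {x : ℝ} (hx : x ∈ Set.Icc (0 : ℝ) 1) :
    |chebVec2 ⬝ᵥ modelVec2 x| ≤ 1 := by
  rw [chebVec2_dotProduct_modelVec2, abs_le]
  constructor
  · have h : (3 + 2 * √2) * x ^ 2 - (2 + 2 * √2) * x + 1 =
        (3 + 2 * √2) * (x - (√2 - 1)) ^ 2 := by
      linear_combination (4 * x + 1 - 2 * √2) * Real.sq_sqrt (zero_le_two (α := ℝ))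
    have : 0 ≤ (3 + 2 * √2) * (x - (√2 - 1)) ^ 2 := by positivity
    linarith
  · have h : 1 - ((3 + 2 * √2) * x ^ 2 - (2 + 2 * √2) * x) = (1 - x) * (1 + (3 + 2 * √2) * x) := by
      ring
    have : 0 ≤ (1 - x) * (1 + (3 + 2 * √2) * x) :=
      mul_nonneg (sub_nonneg.2 hx.2) (by have := hx.1; positivity)
    linarith

lemma chebVec2_dotProduct_modelVec2_sqrt_two_sub_one :
    chebVec2 ⬝ᵥ modelVec2 (√2 - 1) = -1 := by
  rw [chebVec2_dotProduct_modelVec2]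
  linear_combination (2 * √2 - 3) * Real.sq_sqrt (zero_le_two (α := ℝ))

lemma chebVec2_dotProduct_modelVec2_one : chebVec2 ⬝ᵥ modelVec2 1 = 1 := by
  rw [chebVec2_dotProduct_modelVec2]
  ring

/-- For the quadratic model without intercept on `[0,1]`: if
`z ∈ (−∞, (1 − √2)/2) ∪ (1/2, ∞)`, the design supported at `√2 − 1` and `1` with weights
`ωᵢ(z) = |L̄_i′(z)|/(|L̄_1′(z)| + |L̄_2′(z)|)` is `c`-optimal for `c = f′(z) = (1, 2z)ᵀ`,
with optimal value `(|L̄_1′(z)| + |L̄_2′(z)|)²`. -/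
theorem stmt_19 (z : ℝ) (hz : z < (1 - Real.sqrt 2) / 2 ∨ 1 / 2 < z) :
    (∀ (η : Design2) (v : Fin 2 → ℝ),
      (infoMatrix2 η).mulVec v = ![1, 2 * z] →
      (|deriv (Lbar 2 nodes2 1) z| + |deriv (Lbar 2 nodes2 2) z|) ^ 2 ≤
        ![1, 2 * z] ⬝ᵥ v) ∧
    (∃ v : Fin 2 → ℝ,
      ((|deriv (Lbar 2 nodes2 1) z| / (|deriv (Lbar 2 nodes2 1) z| + |deriv (Lbar 2 nodes2 2) z|)) •
          Matrix.vecMulVec (modelVec2 (Real.sqrt 2 - 1)) (modelVec2 (Real.sqrt 2 - 1)) +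
        (|deriv (Lbar 2 nodes2 2) z| / (|deriv (Lbar 2 nodes2 1) z| + |deriv (Lbar 2 nodes2 2) z|)) •
          Matrix.vecMulVec (modelVec2 1) (modelVec2 1)).mulVec v = ![1, 2 * z] ∧
      ![1, 2 * z] ⬝ᵥ v =
        (|deriv (Lbar 2 nodes2 1) z| + |deriv (Lbar 2 nodes2 2) z|) ^ 2) := by
  have hc := deriv_Lbar_two_smul_modelVec2_add (s := nodes2)
    (by rw [nodes2_one]; linarith [Real.one_lt_sqrt_two]) (by rw [nodes2_two]; exact one_ne_zero)
    (by rw [nodes2_one, nodes2_two]; linarith [Real.sqrt_two_lt_three_halves]) z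
  rw [nodes2_one, nodes2_two] at hc
  set a₁ := deriv (Lbar 2 nodes2 1) z
  set a₂ := deriv (Lbar 2 nodes2 2) z
  have ha : a₁ * a₂ < 0 := deriv_Lbar_nodes2_one_mul_deriv_two_neg hz
  have hu := dotProduct_smul_add_smul chebVec2_dotProduct_modelVec2_sqrt_two_sub_one
    chebVec2_dotProduct_modelVec2_one a₁ a₂
  rw [← hc, sq_abs_add_abs_of_mul_nonpos ha.le, ← hu]
  refine ⟨fun η v hv => sq_dotProduct_le_of_mulVec_eq η.wts_nonneg η.wts_sum
    (fun k => abs_chebVec2_dotProduct_modelVec2_le_one (η.pts_mem k)) hv,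
    (a₂ - a₁) • chebVec2, two_point_mulVec_eq chebVec2_dotProduct_modelVec2_sqrt_two_sub_one
    chebVec2_dotProduct_modelVec2_one ha, ?_⟩
  rw [dotProduct_smul, dotProduct_comm, hu, smul_eq_mul, sq]
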